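/- Let a, b, c be positive integers with a ≤ b and let x be an integer with a ≤ x ≤ b. Then Σ_{i=1}^{a} E(i, x−a+i) = a·c·(a+b−x)/(a+b); equivalently, (a+b) · Σ_T Σ_{i=1}^{a} T(i, x−a+i) = a·c·(a+b−x) · N(a,b,c), where the outer sum is over all plane partitions T in the a×b×c box. -/

import Mathlib

/-! Pad a plane partition `T` to all of `ℤ²` by `c` above and to the left of the box and by `0`
below and to the right of it. Toggling one cell, `t ↦ m + M - t` with `m` the minimum of its
upper and left neighbours and `M` the maximum of its lower and right ones, is an involution of
the plane partitions in the box, so `∑_T 2 t = ∑_T (m + M)` at every cell. Along a diagonal,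
`∑ (m + M)` is the sum of the two neighbouring diagonals, because `min + max = x + y` and the
neighbours interlace. Hence the total `S d` over all `T` of the diagonal `j - i = d` (rows
`1, …, a`) satisfies `S (d + 1) + S (d - 1) = 2 S d` for `-a < d < b`: it is affine on `[-a, b]`,
from `S (-a) = N a c` to `S b = 0`. -/

open Finset

/-- Plane partitions in an `a × b × c` box: assignments of entries in `{0, …, c}` to the
cells of an `a × b` rectangle with weakly decreasing rows and columns. -/
def PlanePartitions (a b c : ℕ) : Finset (Fin a → Fin b → Fin (c + 1)) :=
  univ.filter (fun T =>
    (∀ i : Fin a, ∀ j j' : Fin b, j ≤ j' → T i j' ≤ T i j) ∧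
    (∀ i i' : Fin a, ∀ j : Fin b, i ≤ i' → T i' j ≤ T i j))

/-- The entry `T(i, j)` of a plane partition at the 1-based cell `(i, j)`. -/
def entry (a b c : ℕ) (T : Fin a → Fin b → Fin (c + 1)) (i j : ℕ) : ℕ :=
  if h : 1 ≤ i ∧ i ≤ a ∧ 1 ≤ j ∧ j ≤ b then
    (T ⟨i - 1, by omega⟩ ⟨j - 1, by omega⟩ : ℕ)
  else 0

/-- `E a b c i j` is the expected value of the entry at the 1-based cell `(i, j)` of a
uniformly random plane partition in an `a × b × c` box. -/
def E (a b c i j : ℕ) : ℚ :=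
  (∑ T ∈ PlanePartitions a b c, (entry a b c T i j : ℚ))
    / ((PlanePartitions a b c).card : ℚ)

theorem Finset.sum_range_min_add_max {α : Type*} [AddCommMonoid α] [LinearOrder α]
    (y z : ℕ → α) (n : ℕ) :
    ∑ k ∈ range n, (min (y k) (z k) + max (y (k + 1)) (z (k + 1))) + min (y n) (z n) =
      min (y 0) (z 0) + ∑ k ∈ range n, (y (k + 1) + z (k + 1)) := by
  induction n with
  | zero => simp
  | succ n ih =>
    rw [sum_range_succ, sum_range_succ, ← add_assoc (min (y 0) (z 0)), ← ih,
      ← min_add_max (y (n + 1)) (z (n + 1))]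
    abel

theorem mul_eq_sub_mul_add_mul_of_add_eq_two_mul {R : Type*} [CommRing R] {f : ℕ → R} {n : ℕ}
    (hf : ∀ k, k + 2 ≤ n → f (k + 2) + f k = 2 * f (k + 1)) {k : ℕ} (hk : k ≤ n) :
    (n : R) * f k = (n - k) * f 0 + k * f n := by
  have hstep : ∀ k, k + 1 ≤ n → f (k + 1) - f k = f 1 - f 0 := by
    intro k
    induction k with
    | zero => simp
    | succ k ih =>
      intro hk
      rw [← ih (by omega)]
      linear_combination hf k hk
  have hlin : ∀ k, k ≤ n → f k = f 0 + k * (f 1 - f 0) := by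
    intro k
    induction k with
    | zero => simp
    | succ k ih =>
      intro hk
      push_cast
      linear_combination ih (by omega) + hstep k hk
  rw [hlin k hk, hlin n le_rfl]
  ring

namespace PlanePartitions

variable {a b c : ℕ}

def extEntry (T : Fin a → Fin b → Fin (c + 1)) (i j : ℤ) : ℕ :=
  if h₀ : i ≤ 0 ∨ j ≤ 0 then c
  else if h : i ≤ a ∧ j ≤ b then T ⟨(i - 1).toNat, by omega⟩ ⟨(j - 1).toNat, by omega⟩
  else 0

variable (T : Fin a → Fin b → Fin (c + 1))

lemma extEntry_le (i j : ℤ) : extEntry T i j ≤ c := by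
  unfold extEntry
  split_ifs
  exacts [le_rfl, Fin.is_le _, Nat.zero_le c]

lemma extEntry_of_nonpos {i j : ℤ} (h : i ≤ 0 ∨ j ≤ 0) : extEntry T i j = c :=
  dif_pos h

lemma extEntry_of_lt {i j : ℤ} (hi : 0 < i) (hj : 0 < j) (h : a < i ∨ b < j) :
    extEntry T i j = 0 := by
  rw [extEntry, dif_neg (by omega), dif_neg (by omega)]

lemma extEntry_natCast_add_one (p : Fin a) (q : Fin b) :
    extEntry T (p + 1) (q + 1) = T p q := by
  rw [extEntry, dif_neg (by omega), dif_pos (by omega)]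
  congr <;> simp

lemma extEntry_natCast {i j : ℕ} (hi : 1 ≤ i) (hj : 1 ≤ j) :
    extEntry T i j = entry a b c T i j := by
  rw [extEntry, entry, dif_neg (by omega)]
  by_cases h : i ≤ a ∧ j ≤ b
  · rw [dif_pos (by omega), dif_pos (by omega)]
    congr <;> omega
  · rw [dif_neg (by omega), dif_neg (by omega)]

lemma exists_eq_natCast_add_one {i j : ℤ} (hi : 0 < i) (hia : i ≤ a) (hj : 0 < j)
    (hjb : j ≤ b) : ∃ (p : Fin a) (q : Fin b), i = p + 1 ∧ j = q + 1 :=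
  ⟨⟨(i - 1).toNat, by omega⟩, ⟨(j - 1).toNat, by omega⟩, by simp; omega, by simp; omega⟩

variable {T}

lemma extEntry_add_one_right_le (hT : T ∈ PlanePartitions a b c) (i j : ℤ) :
    extEntry T i (j + 1) ≤ extEntry T i j := by
  have hrow := (mem_filter.mp hT).2.1
  by_cases h0 : i ≤ 0 ∨ j ≤ 0
  · rw [extEntry_of_nonpos T h0]; exact extEntry_le T _ _
  by_cases h1 : a < i ∨ b < j + 1
  · rw [extEntry_of_lt T (by omega) (by omega) h1]; exact Nat.zero_le _
  obtain ⟨p, q, rfl, rfl⟩ := exists_eq_natCast_add_one (a := a) (b := b) (i := i) (j := j)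
    (by omega) (by omega) (by omega) (by omega)
  have hq : (q : ℕ) + 1 < b := by omega
  have := hrow p q ⟨q + 1, hq⟩ (Fin.mk_le_mk.mpr (by omega))
  rw [← Fin.val_fin_le] at this
  rwa [extEntry_natCast_add_one,
    show ((q : ℕ) : ℤ) + 1 + 1 = (((⟨q + 1, hq⟩ : Fin b) : ℕ) : ℤ) + 1 by simp,
    extEntry_natCast_add_one]

lemma extEntry_add_one_left_le (hT : T ∈ PlanePartitions a b c) (i j : ℤ) :
    extEntry T (i + 1) j ≤ extEntry T i j := by
  have hcol := (mem_filter.mp hT).2.2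
  by_cases h0 : i ≤ 0 ∨ j ≤ 0
  · rw [extEntry_of_nonpos T h0]; exact extEntry_le T _ _
  by_cases h1 : a < i + 1 ∨ b < j
  · rw [extEntry_of_lt T (by omega) (by omega) h1]; exact Nat.zero_le _
  obtain ⟨p, q, rfl, rfl⟩ := exists_eq_natCast_add_one (a := a) (b := b) (i := i) (j := j)
    (by omega) (by omega) (by omega) (by omega)
  have hp : (p : ℕ) + 1 < a := by omega
  have := hcol p ⟨p + 1, hp⟩ q (Fin.mk_le_mk.mpr (by omega))
  rwa [extEntry_natCast_add_one,
    show ((p : ℕ) : ℤ) + 1 + 1 = (((⟨p + 1, hp⟩ : Fin a) : ℕ) : ℤ) + 1 by simp,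
    extEntry_natCast_add_one]

lemma mem_of_extEntry_add_one_le (hrow : ∀ i j, extEntry T i (j + 1) ≤ extEntry T i j)
    (hcol : ∀ i j, extEntry T (i + 1) j ≤ extEntry T i j) : T ∈ PlanePartitions a b c := by
  refine mem_filter.mpr ⟨mem_univ _, fun i j j' h => ?_, fun i i' j h => ?_⟩
  · have := antitone_int_of_succ_le (hrow (i + 1))
      (show ((j : ℕ) : ℤ) + 1 ≤ (j' : ℕ) + 1 by have := Fin.le_def.mp h; omega)
    rwa [extEntry_natCast_add_one, extEntry_natCast_add_one] at this
  · have := antitone_int_of_succ_le (f := (extEntry T · ((j : ℕ) + 1))) (hcol · _)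
      (show ((i : ℕ) : ℤ) + 1 ≤ (i' : ℕ) + 1 by have := Fin.le_def.mp h; omega)
    beta_reduce at this
    rwa [extEntry_natCast_add_one, extEntry_natCast_add_one] at this

variable (T)

def minAboveLeft (i j : ℤ) : ℕ := min (extEntry T (i - 1) j) (extEntry T i (j - 1))

def maxBelowRight (i j : ℤ) : ℕ := max (extEntry T i (j + 1)) (extEntry T (i + 1) j)

lemma minAboveLeft_le (i j : ℤ) : minAboveLeft T i j ≤ c :=
  (min_le_left _ _).trans (extEntry_le T _ _)

/-- Reflect `T p q` in the interval `[maxBelowRight, minAboveLeft]` allowed by its neighbours;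
written as `m - (t - M)` so that the value stays at most `c` for every `T`. -/
def toggle (p : Fin a) (q : Fin b) : Fin a → Fin b → Fin (c + 1) := fun i j =>
  if i = p ∧ j = q then
    ⟨minAboveLeft T (p + 1) (q + 1) - (T p q - maxBelowRight T (p + 1) (q + 1)),
      Nat.lt_succ_of_le ((Nat.sub_le _ _).trans (minAboveLeft_le T _ _))⟩
  else T i j

lemma extEntry_toggle (p : Fin a) (q : Fin b) (i j : ℤ) :
    extEntry (toggle T p q) i j =
      if i = p + 1 ∧ j = q + 1 then
        minAboveLeft T (p + 1) (q + 1) - (T p q - maxBelowRight T (p + 1) (q + 1))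
      else extEntry T i j := by
  split_ifs with h
  · rw [h.1, h.2, extEntry_natCast_add_one]
    simp [toggle]
  · unfold extEntry
    split_ifs
    · rfl
    · rw [toggle, if_neg (by rw [Fin.ext_iff, Fin.ext_iff]; dsimp only; omega)]
    · rfl

lemma minAboveLeft_toggle (p : Fin a) (q : Fin b) :
    minAboveLeft (toggle T p q) (p + 1) (q + 1) = minAboveLeft T (p + 1) (q + 1) := by
  simp only [minAboveLeft, extEntry_toggle, add_sub_cancel_right]
  rw [if_neg (by omega), if_neg (by omega)]

lemma maxBelowRight_toggle (p : Fin a) (q : Fin b) :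
    maxBelowRight (toggle T p q) (p + 1) (q + 1) = maxBelowRight T (p + 1) (q + 1) := by
  simp only [maxBelowRight, extEntry_toggle]
  rw [if_neg (by omega), if_neg (by omega)]

variable {T}

lemma maxBelowRight_le (hT : T ∈ PlanePartitions a b c) (i j : ℤ) :
    maxBelowRight T i j ≤ extEntry T i j :=
  max_le (extEntry_add_one_right_le hT i j) (extEntry_add_one_left_le hT i j)

lemma le_minAboveLeft (hT : T ∈ PlanePartitions a b c) (i j : ℤ) :
    extEntry T i j ≤ minAboveLeft T i j := by
  refine le_min ?_ ?_
  · simpa using extEntry_add_one_left_le hT (i - 1) j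
  · simpa using extEntry_add_one_right_le hT i (j - 1)

lemma toggle_mem (hT : T ∈ PlanePartitions a b c) (p : Fin a) (q : Fin b) :
    toggle T p q ∈ PlanePartitions a b c := by
  have hlo := maxBelowRight_le hT (p + 1) (q + 1)
  have hhi := le_minAboveLeft hT (p + 1) (q + 1)
  rw [extEntry_natCast_add_one] at hlo hhi
  simp only [minAboveLeft, maxBelowRight, add_sub_cancel_right] at hlo hhi
  refine mem_of_extEntry_add_one_le (fun i j => ?_) (fun i j => ?_)
  · have := extEntry_add_one_right_le hT i j
    rw [extEntry_toggle, extEntry_toggle]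
    simp only [minAboveLeft, maxBelowRight, add_sub_cancel_right]
    split_ifs with h₁ h₂ h₂
    · omega
    · obtain ⟨rfl, hj⟩ := h₁
      obtain rfl : j = q := by omega
      omega
    · obtain ⟨rfl, rfl⟩ := h₂
      omega
    · exact this
  · have := extEntry_add_one_left_le hT i j
    rw [extEntry_toggle, extEntry_toggle]
    simp only [minAboveLeft, maxBelowRight, add_sub_cancel_right]
    split_ifs with h₁ h₂ h₂
    · omega
    · obtain ⟨hi, rfl⟩ := h₁
      obtain rfl : i = p := by omega
      omega
    · obtain ⟨rfl, rfl⟩ := h₂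
      omega
    · exact this

lemma toggle_toggle (hT : T ∈ PlanePartitions a b c) (p : Fin a) (q : Fin b) :
    toggle (toggle T p q) p q = T := by
  have hlo := maxBelowRight_le hT (p + 1) (q + 1)
  have hhi := le_minAboveLeft hT (p + 1) (q + 1)
  rw [extEntry_natCast_add_one] at hlo hhi
  funext i j
  by_cases h : i = p ∧ j = q
  · obtain ⟨rfl, rfl⟩ := h
    ext
    simp only [toggle, and_self, if_true, minAboveLeft_toggle, maxBelowRight_toggle]
    omega
  · simp only [toggle, if_neg h]

lemma two_mul_sum_extEntry_natCast_add_one (p : Fin a) (q : Fin b) :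
    2 * ∑ T ∈ PlanePartitions a b c, extEntry T (p + 1) (q + 1) =
      ∑ T ∈ PlanePartitions a b c,
        (minAboveLeft T (p + 1) (q + 1) + maxBelowRight T (p + 1) (q + 1)) := by
  simp only [extEntry_natCast_add_one]
  have hsymm : ∑ T ∈ PlanePartitions a b c, (T p q : ℕ) = ∑ T ∈ PlanePartitions a b c,
      (minAboveLeft T (p + 1) (q + 1) + maxBelowRight T (p + 1) (q + 1) - T p q) := by
    refine sum_nbij' (toggle · p q) (toggle · p q) (fun T hT => toggle_mem hT p q)
      (fun T hT => toggle_mem hT p q) (fun T hT => toggle_toggle hT p q)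
      (fun T hT => toggle_toggle hT p q) (fun T hT => ?_)
    have hlo := maxBelowRight_le hT (p + 1) (q + 1)
    have hhi := le_minAboveLeft hT (p + 1) (q + 1)
    rw [extEntry_natCast_add_one] at hlo hhi
    simp only [minAboveLeft_toggle, maxBelowRight_toggle, toggle, and_self, if_true]
    omega
  rw [two_mul]
  nth_rw 2 [hsymm]
  rw [← sum_add_distrib]
  refine sum_congr rfl fun T hT => ?_
  have hhi := le_minAboveLeft hT (p + 1) (q + 1)
  rw [extEntry_natCast_add_one] at hhi
  omega

variable (T) in
lemma minAboveLeft_add_maxBelowRight_of_outside {i j : ℤ} (hi : 0 < i) (hj : j < i + b)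
    (hout : j ≤ 0 ∨ b < j) :
    minAboveLeft T i j + maxBelowRight T i j = 2 * extEntry T i j := by
  have := extEntry_le T i (j + 1)
  simp only [minAboveLeft, maxBelowRight]
  rcases hout with hout | hout
  · rw [extEntry_of_nonpos T (Or.inr hout), extEntry_of_nonpos T (Or.inr hout),
      extEntry_of_nonpos T (Or.inr (by omega : j - 1 ≤ 0)), extEntry_of_nonpos T (Or.inr hout)]
    omega
  · rw [extEntry_of_lt T (by omega) (by omega) (Or.inr hout),
      extEntry_of_lt T (by omega) (by omega) (Or.inr hout),
      extEntry_of_lt T (by omega) (by omega) (Or.inr (by omega : b < j + 1)),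
      extEntry_of_lt T (by omega) (by omega) (Or.inr hout)]
    omega

lemma two_mul_sum_extEntry {i j : ℤ} (hi : 0 < i) (hia : i ≤ a) (hj : j < i + b) :
    2 * ∑ T ∈ PlanePartitions a b c, extEntry T i j =
      ∑ T ∈ PlanePartitions a b c, (minAboveLeft T i j + maxBelowRight T i j) := by
  by_cases hbox : 0 < j ∧ j ≤ b
  · obtain ⟨p, q, rfl, rfl⟩ := exists_eq_natCast_add_one (a := a) (b := b) hi hia hbox.1 hbox.2
    exact two_mul_sum_extEntry_natCast_add_one p q
  · rw [mul_sum]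
    exact sum_congr rfl fun T _ =>
      (minAboveLeft_add_maxBelowRight_of_outside T hi hj (by omega)).symm

variable (T)

def diagonalSum (d : ℤ) : ℕ := ∑ k ∈ range a, extEntry T (k + 1) (k + 1 + d)

lemma diagonalSum_add_diagonalSum {d : ℤ} (hd : 0 < a + d) :
    diagonalSum T (d + 1) + diagonalSum T (d - 1) =
      ∑ k ∈ range a,
        (minAboveLeft T (k + 1) (k + 1 + d) + maxBelowRight T (k + 1) (k + 1 + d)) := by
  -- the `k`-th cell has upper and left neighbours `y k`, `z k`, lower and right ones
  -- `y (k + 1)`, `z (k + 1)`; `y` starts in the padding row `0`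
  set y : ℕ → ℕ := fun k => extEntry T k (k + d + 1)
  set z : ℕ → ℕ := fun k => extEntry T (k + 1) (k + d)
  have key := sum_range_min_add_max y z a
  have hy₀ : y 0 = c := extEntry_of_nonpos T (Or.inl (by simp))
  have hz₀ : z 0 ≤ c := extEntry_le T _ _
  have hza : z a = 0 := extEntry_of_lt T (by omega) (by omega) (Or.inl (by omega))
  have hterm : ∀ k : ℕ,
      minAboveLeft T (k + 1) (k + 1 + d) + maxBelowRight T (k + 1) (k + 1 + d) =
        min (y k) (z k) + max (y (k + 1)) (z (k + 1)) := by
    intro k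
    simp only [minAboveLeft, maxBelowRight, y, z]
    push_cast
    ring_nf
  have hup : diagonalSum T (d + 1) = ∑ k ∈ range a, y (k + 1) := by
    refine sum_congr rfl fun k _ => ?_
    simp only [y]; push_cast; ring_nf
  have hdown : diagonalSum T (d - 1) = ∑ k ∈ range a, z k := by
    refine sum_congr rfl fun k _ => ?_
    simp only [z]; ring_nf
  have hshift := (sum_range_succ z a).symm.trans (sum_range_succ' z a)
  rw [sum_congr rfl fun k _ => hterm k, hup, hdown]
  rw [sum_add_distrib (f := fun k => y (k + 1)), hy₀, hza, min_eq_right hz₀,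
    min_eq_right (Nat.zero_le _)] at key
  omega

lemma diagonalSum_neg : diagonalSum T (-a) = a * c := by
  rw [diagonalSum, sum_congr rfl fun k hk => extEntry_of_nonpos T (Or.inr ?_), sum_const,
    card_range, smul_eq_mul]
  have := mem_range.mp hk
  omega

lemma diagonalSum_of_le {d : ℤ} (hd : b ≤ d) : diagonalSum T d = 0 :=
  sum_eq_zero fun k _ => extEntry_of_lt T (by omega) (by omega) (Or.inr (by omega))

lemma diagonalSum_eq_sum_entry {x : ℕ} (hx : a ≤ x) :
    diagonalSum T (x - a) = ∑ i ∈ Icc 1 a, entry a b c T i (x + i - a) := by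
  rw [← Ico_add_one_right_eq_Icc, sum_Ico_eq_sum_range, add_tsub_cancel_right, diagonalSum]
  refine sum_congr rfl fun k _ => ?_
  rw [← extEntry_natCast T (by omega) (by omega)]
  congr 1 <;> omega

variable {T}

lemma sum_diagonalSum_add_sum_diagonalSum {d : ℤ} (hd₁ : 0 < a + d) (hd₂ : d < b) :
    ∑ T ∈ PlanePartitions a b c, diagonalSum T (d + 1) +
        ∑ T ∈ PlanePartitions a b c, diagonalSum T (d - 1) =
      2 * ∑ T ∈ PlanePartitions a b c, diagonalSum T d := by
  rw [← sum_add_distrib, sum_congr rfl fun T _ => diagonalSum_add_diagonalSum T hd₁, sum_comm]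
  simp only [diagonalSum]
  rw [sum_comm (s := PlanePartitions a b c), mul_sum]
  refine sum_congr rfl fun k hk => (two_mul_sum_extEntry ?_ ?_ ?_).symm
  all_goals have := mem_range.mp hk; omega

lemma card_pos : 0 < #(PlanePartitions a b c) :=
  Finset.card_pos.mpr ⟨fun _ _ => 0, by simp [PlanePartitions]⟩

lemma mul_sum_diagonalSum {x : ℕ} (hx : x ≤ a + b) :
    ((a + b : ℕ) : ℚ) * ∑ T ∈ PlanePartitions a b c, (diagonalSum T (x - a) : ℚ) =
      ((a + b : ℕ) - x) * (#(PlanePartitions a b c) * (a * c)) := by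
  have key := mul_eq_sub_mul_add_mul_of_add_eq_two_mul
    (f := fun k : ℕ => ∑ T ∈ PlanePartitions a b c, (diagonalSum T (k - a) : ℚ))
    (fun k hk => ?_) hx
  · simpa [diagonalSum_neg, diagonalSum_of_le, mul_comm] using key
  · have := sum_diagonalSum_add_sum_diagonalSum (a := a) (b := b) (c := c) (d := k + 1 - a)
      (by omega) (by omega)
    rw [show ((k + 2 : ℕ) : ℤ) - a = k + 1 - a + 1 by push_cast; ring,
      show ((k : ℕ) : ℤ) - a = k + 1 - a - 1 by ring,
      show ((k + 1 : ℕ) : ℤ) - a = k + 1 - a by push_cast; ring]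
    exact_mod_cast this

end PlanePartitions

theorem diagonal_expected_sum_middle_a_le_b_general (a b c : ℕ) (ha : 0 < a) (x : ℕ) (hx1 : a ≤ x)
    (hx2 : x ≤ b) :
    ∑ i ∈ Finset.Icc 1 a, E a b c i (x + i - a)
      = (a : ℚ) * c * ((a : ℚ) + b - x) / ((a : ℚ) + b) := by
  have hN : (0 : ℚ) < #(PlanePartitions a b c) := by exact_mod_cast PlanePartitions.card_pos
  have hsum : ∑ i ∈ Icc 1 a, E a b c i (x + i - a) =
      (∑ T ∈ PlanePartitions a b c, (PlanePartitions.diagonalSum T (x - a) : ℚ)) /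
        #(PlanePartitions a b c) := by
    simp only [E, ← sum_div, PlanePartitions.diagonalSum_eq_sum_entry _ hx1]
    rw [sum_comm]
    push_cast
    rfl
  have key := PlanePartitions.mul_sum_diagonalSum (c := c) (by omega : x ≤ a + b)
  rw [hsum, div_eq_div_iff hN.ne' (by positivity)]
  push_cast at key
  linear_combination key

theorem diagonal_expected_sum_middle_a_le_b (a b c : ℕ) (ha : 0 < a) (hb : 0 < b)
    (hc : 0 < c) (hab : a ≤ b) (x : ℕ) (hx1 : a ≤ x) (hx2 : x ≤ b) :
    ∑ i ∈ Finset.Icc 1 a, E a b c i (x + i - a)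
      = (a : ℚ) * c * ((a : ℚ) + b - x) / ((a : ℚ) + b) :=
  diagonal_expected_sum_middle_a_le_b_general a b c ha x hx1 hx2
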